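/- arXiv:1811.06218 — 6 statements merged into one kernel-verified Lean document; each statement's English description precedes it below -/
import Mathlib

section
/- Let T be a minimal rotation of the unit circle S¹ (rotation by an angle 2πθ with θ irrational) and let f be a homeomorphism of S¹ commuting with T. Then f is itself a rotation of S¹. -/
/-!
The quotient `z ↦ f z * z⁻¹` is continuous and, since `f` commutes with multiplication by
`a = exp (2πiθ)`, invariant under `z ↦ a * z`. It is therefore constant on the orbit
`{aⁿ : n ∈ ℤ}` of `1`, which is dense because `θ` is irrational, hence constant: `f z = f 1 * z`.
-/

open Real

theorem Circle.denseRange_zpow_exp_two_pi_mul {θ : ℝ} (hθ : Irrational θ) :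
    DenseRange (Circle.exp (2 * π * θ) ^ · : ℤ → Circle) := by
  have hdense : DenseRange (· • (θ : AddCircle (1 : ℝ)) : ℤ → AddCircle (1 : ℝ)) :=
    AddCircle.denseRange_zsmul_coe_iff.2 (by rwa [div_one])
  convert (AddCircle.homeomorphCircle one_ne_zero).surjective.denseRange.comp hdense
    (AddCircle.homeomorphCircle one_ne_zero).continuous using 2 with n
  simp [AddCircle.homeomorphCircle_apply, AddCircle.toCircle_zsmul, AddCircle.toCircle_apply_mk]

theorem apply_eq_apply_one_of_mul_left_invariant {G X : Type*} [Group G] [TopologicalSpace G]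
    [TopologicalSpace X] [T2Space X] {a : G} (ha : DenseRange (a ^ · : ℤ → G)) {g : G → X}
    (hg : Continuous g) (hinv : ∀ x, g (a * x) = g x) (x : G) : g x = g 1 := by
  have hstep (n : ℤ) : g (a ^ (1 + n)) = g (a ^ n) := by rw [zpow_one_add, hinv]
  have hpow (n : ℤ) : g (a ^ n) = g 1 := by
    induction n using Int.induction_on with
    | zero => rw [zpow_zero]
    | succ n ih => rw [add_comm, hstep, ih]
    | pred n ih => rw [← ih, ← hstep]; ring_nf
  exact congrFun (ha.equalizer hg continuous_const (funext hpow)) x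

/-- If `T` is the minimal rotation of the unit circle `S¹ ⊆ ℂ` by angle `2πθ` with `θ`
irrational, and `f` is a homeomorphism of `S¹` commuting with `T`, then `f` is itself a
rotation: there is `c ∈ S¹` with `f x = c * x` for all `x`. -/
theorem rotation_of_commutes_with_minimal_rotation
    (θ : ℝ) (hθ : Irrational θ) (f : Circle ≃ₜ Circle)
    (hcomm : ∀ x : Circle, f (Circle.exp (2 * Real.pi * θ) * x)
      = Circle.exp (2 * Real.pi * θ) * f x) :
    ∃ c : Circle, ∀ x : Circle, f x = c * x := by
  have hinv (z : Circle) : f (Circle.exp (2 * π * θ) * z) * (Circle.exp (2 * π * θ) * z)⁻¹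
      = f z * z⁻¹ := by
    rw [hcomm, mul_inv, mul_mul_mul_comm, mul_inv_cancel, one_mul]
  have hquot := apply_eq_apply_one_of_mul_left_invariant
    (Circle.denseRange_zpow_exp_two_pi_mul hθ) (g := fun z => f z * z⁻¹) (by fun_prop) hinv
  exact ⟨f 1, fun x => mul_inv_eq_iff_eq_mul.1 <| by simpa using hquot x⟩
end

section
/- Let H be a subgroup of the group of orientation-preserving homeomorphisms of S¹ that has a periodic (finite) orbit. Then the set P(H) of all points lying on finite H-orbits is a closed (hence compact) subset of S¹. -/
/-- The group of self-homeomorphisms of a topological space. -/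
instance {X : Type*} [TopologicalSpace X] : Group (X ≃ₜ X) where
  mul f g := g.trans f
  one := Homeomorph.refl X
  inv := Homeomorph.symm
  mul_assoc _ _ _ := rfl
  one_mul _ := Homeomorph.ext fun _ => rfl
  mul_one _ := Homeomorph.ext fun _ => rfl
  inv_mul_cancel f := Homeomorph.ext f.symm_apply_apply

/-- A homeomorphism of the circle `ℝ/ℤ` is orientation preserving if it lifts to a
strictly increasing map `F : ℝ → ℝ` commuting with the unit translation. -/
def OrientationPreserving (f : UnitAddCircle ≃ₜ UnitAddCircle) : Prop :=
  ∃ F : ℝ → ℝ, StrictMono F ∧ (∀ x : ℝ, F (x + 1) = F x + 1) ∧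
    ∀ x : ℝ, f (x : UnitAddCircle) = ((F x : ℝ) : UnitAddCircle)

/-- The orbit of a point under a subgroup of the homeomorphism group. -/
def orbitOf (H : Subgroup (UnitAddCircle ≃ₜ UnitAddCircle)) (x : UnitAddCircle) :
    Set UnitAddCircle :=
  {y | ∃ h ∈ H, h x = y}

/-- Key lemma: if `h ∈ H` fixes `x₀` and is orientation preserving, then any point with
finite `H`-orbit is fixed by `h`. -/
lemma fixed_of_finite_orbit (H : Subgroup (UnitAddCircle ≃ₜ UnitAddCircle))
    (x₀ : UnitAddCircle) (h : UnitAddCircle ≃ₜ UnitAddCircle) (hH : h ∈ H)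
    (hor : OrientationPreserving h) (hfix : h x₀ = x₀)
    (x : UnitAddCircle) (hx : (orbitOf H x).Finite) : h x = x := by
  obtain ⟨F, hFmono, hF1, hFlift⟩ := hor
  obtain ⟨t₀, ht₀⟩ := QuotientAddGroup.mk_surjective x₀
  have ht₀' : ((t₀ : ℝ) : UnitAddCircle) = x₀ := ht₀
  have hcoeF : ((F t₀ : ℝ) : UnitAddCircle) = (t₀ : UnitAddCircle) := by
    rw [← hFlift, ht₀', hfix]
  obtain ⟨k, hk⟩ : ∃ k : ℤ, F t₀ = t₀ + k := by
    rw [QuotientAddGroup.eq_iff_sub_mem] at hcoeF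
    obtain ⟨k, hk⟩ := hcoeF
    simp only [zsmul_eq_mul, mul_one] at hk
    exact ⟨k, by linarith⟩
  set G : ℝ → ℝ := fun t => F t - k with hGdef
  have hGmono : StrictMono G := fun a b hab => by
    simp only [hGdef]; exact sub_lt_sub_right (hFmono hab) _
  have hG1 : ∀ t, G (t + 1) = G t + 1 := fun t => by
    simp only [hGdef, hF1]; ring
  have hGlift : ∀ t : ℝ, h (t : UnitAddCircle) = ((G t : ℝ) : UnitAddCircle) := by
    intro t
    rw [hFlift]
    show _ = QuotientAddGroup.mk _
    rw [QuotientAddGroup.eq_iff_sub_mem]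
    refine ⟨k, ?_⟩
    simp only [hGdef, zsmul_eq_mul, mul_one]
    ring
  have hGt₀ : G t₀ = t₀ := by simp only [hGdef, hk]; ring
  set ψ : UnitAddCircle → ℝ := fun y => (AddCircle.equivIco 1 t₀ y : ℝ) with hψdef
  have hψmem : ∀ y, ψ y ∈ Set.Ico t₀ (t₀ + 1) := fun y => (AddCircle.equivIco 1 t₀ y).2
  have hψcoe : ∀ y, ((ψ y : ℝ) : UnitAddCircle) = y := fun y =>
    (AddCircle.equivIco 1 t₀).symm_apply_apply y
  have key : ∀ y, ψ (h y) = G (ψ y) := by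
    intro y
    have hmem : G (ψ y) ∈ Set.Ico t₀ (t₀ + 1) := by
      obtain ⟨h1, h2⟩ := hψmem y
      constructor
      · calc t₀ = G t₀ := hGt₀.symm
          _ ≤ G (ψ y) := hGmono.monotone h1
      · have h3 := hGmono h2
        rwa [hG1, hGt₀] at h3
    have hcoe : ((G (ψ y) : ℝ) : UnitAddCircle) = h y := by rw [← hGlift, hψcoe]
    exact (AddCircle.coe_eq_coe_iff_of_mem_Ico (hψmem (h y)) hmem).mp
      (by rw [hψcoe, hcoe])
  set v : ℕ → ℝ := fun n => ψ ((h ^ n) x) with hvdef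
  have hv : ∀ n, v (n + 1) = G (v n) := by
    intro n
    have : (h ^ (n + 1)) x = h ((h ^ n) x) := by rw [pow_succ']; rfl
    simp only [hvdef, this, key]
  have hv0 : v 0 = ψ x := by simp [hvdef, pow_zero]
  have hS : (ψ '' orbitOf H x).Finite := hx.image ψ
  have hvS : ∀ n, v n ∈ ψ '' orbitOf H x := fun n => ⟨(h ^ n) x, ⟨h ^ n, pow_mem hH n, rfl⟩, rfl⟩
  have hfin : ¬ (Set.range v).Infinite := fun hinf =>
    hinf (hS.subset (Set.range_subset_iff.mpr hvS))
  rcases lt_trichotomy (G (ψ x)) (ψ x) with hlt | heq | hgt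
  · exfalso
    apply hfin
    have hanti : StrictAnti v := by
      apply strictAnti_nat_of_succ_lt
      intro n
      induction n with
      | zero => rw [hv, hv0]; exact hlt
      | succ m ih => have h5 := hGmono ih; rwa [← hv (m + 1), ← hv m] at h5
    exact Set.infinite_range_of_injective hanti.injective
  · rw [← hψcoe (h x), key x, heq, hψcoe]
  · exfalso
    apply hfin
    have hmono : StrictMono v := by
      apply strictMono_nat_of_lt_succ
      intro n
      induction n with
      | zero => rw [hv, hv0]; exact hgt
      | succ m ih => have h5 := hGmono ih; rwa [← hv (m + 1), ← hv m] at h5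
    exact Set.infinite_range_of_injective hmono.injective

/-- If a subgroup `H` of the orientation-preserving homeomorphisms of the circle has a
finite (periodic) orbit, then the set `P(H)` of points with finite `H`-orbit is a closed,
hence compact, subset of the circle. -/
theorem periodicPoints_isClosed (H : Subgroup (UnitAddCircle ≃ₜ UnitAddCircle))
    (hop : ∀ h ∈ H, OrientationPreserving h)
    (hper : ∃ x : UnitAddCircle, (orbitOf H x).Finite) :
    IsClosed {x : UnitAddCircle | (orbitOf H x).Finite} ∧
      IsCompact {x : UnitAddCircle | (orbitOf H x).Finite} := by
  classical
  obtain ⟨x₀, hx₀⟩ := hper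
  have main : {x : UnitAddCircle | (orbitOf H x).Finite} =
      ⋂ (h : UnitAddCircle ≃ₜ UnitAddCircle) (_ : h ∈ H) (_ : h x₀ = x₀),
        {x : UnitAddCircle | h x = x} := by
    ext x
    simp only [Set.mem_iInter, Set.mem_setOf_eq]
    constructor
    · intro hx h hH hfix
      exact fixed_of_finite_orbit H x₀ h hH (hop h hH) hfix x hx
    · intro hx
      set Φ : UnitAddCircle → UnitAddCircle := fun y =>
        if hy : ∃ g, g ∈ H ∧ g x₀ = y then hy.choose x else x with hΦ
      have hsub : orbitOf H x ⊆ Φ '' (orbitOf H x₀) := by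
        rintro _ ⟨g, hg, rfl⟩
        refine ⟨g x₀, ⟨g, hg, rfl⟩, ?_⟩
        have hy : ∃ g', g' ∈ H ∧ g' x₀ = g x₀ := ⟨g, hg, rfl⟩
        rw [hΦ]
        simp only [dif_pos hy]
        obtain ⟨hgH', hgx₀⟩ := hy.choose_spec
        have h1 : (g⁻¹ * hy.choose) ∈ H := mul_mem (inv_mem hg) hgH'
        have h2 : (g⁻¹ * hy.choose) x₀ = x₀ := by
          show g.symm (hy.choose x₀) = x₀
          rw [hgx₀]; exact g.symm_apply_apply x₀
        have h3 : g.symm (hy.choose x) = x := hx _ h1 h2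
        calc hy.choose x = g (g.symm (hy.choose x)) := (g.apply_symm_apply _).symm
          _ = g x := by rw [h3]
      exact (hx₀.image Φ).subset hsub
  have hclosed : IsClosed {x : UnitAddCircle | (orbitOf H x).Finite} := by
    rw [main]
    exact isClosed_iInter fun h => isClosed_iInter fun _ => isClosed_iInter fun _ =>
      isClosed_eq h.continuous continuous_id
  exact ⟨hclosed, hclosed.isCompact⟩
end

section
/- Let H be a subgroup of the group of orientation-preserving homeomorphisms of S¹ that has a periodic (finite) orbit. Then all finite orbits of H have the same cardinality. -/
/-!
An orientation-preserving homeomorphism `k` of the circle with a fixed point fixes every finite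
`k`-invariant set pointwise: cutting the circle open at the fixed point turns `k` into a strictly
increasing self-map of an interval, and such a map permutes a finite invariant set monotonically,
hence trivially. Applied to `k = h⁻¹ g` with `g x = h x`, this shows that two elements of `H`
agree at a point of one finite orbit iff they agree at a point of any other finite orbit. Both
orbits are therefore the quotient of `H` by the same equivalence relation.
-/

open Set

theorem StrictMonoOn.eq_self_of_mapsTo {α : Type*} [LinearOrder α] {f : α → α} {s : Set α}
    (hf : StrictMonoOn f s) (hs : s.Finite) (hmaps : MapsTo f s s) {x : α} (hx : x ∈ s) :
    f x = x := by
  have : Finite s := hs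
  have hg : StrictMono (hmaps.restrict f s s) := fun a b hab => hf a.2 b.2 hab
  have hfix : hmaps.restrict f s s ⟨x, hx⟩ = ⟨x, hx⟩ := le_antisymm hg.apply_le hg.le_apply
  exact congrArg Subtype.val hfix

theorem Set.ncard_range_eq_of_apply_eq_iff {ι α β : Type*} {f : ι → α} {g : ι → β}
    (h : ∀ i j, f i = f j ↔ g i = g j) : (range f).ncard = (range g).ncard := by
  rw [← Nat.card_coe_set_eq, ← Nat.card_coe_set_eq]
  exact Nat.card_congr <| (Setoid.quotientKerEquivRange f).symm.trans <|
    (Quotient.congrRight h).trans (Setoid.quotientKerEquivRange g)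

namespace OrientationPreserving

variable {f : UnitAddCircle ≃ₜ UnitAddCircle}

theorem exists_lift_fixing (hf : OrientationPreserving f) {a : ℝ} (ha : f a = a) :
    ∃ G : ℝ → ℝ, StrictMono G ∧ (∀ t, G (t + 1) = G t + 1) ∧
      (∀ t : ℝ, f t = G t) ∧ G a = a := by
  obtain ⟨F, hF, hF1, hfF⟩ := hf
  have hshift : ((F a - a : ℝ) : UnitAddCircle) = 0 := by
    rw [AddCircle.coe_sub, ← hfF, ha, sub_self]
  refine ⟨fun t => F t - (F a - a), fun u v huv => sub_lt_sub_right (hF huv) _,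
    fun t => by simp only [hF1]; ring, fun t => ?_, by ring⟩
  rw [hfF, AddCircle.coe_sub, hshift, sub_zero]

theorem apply_eq_self_of_mapsTo (hf : OrientationPreserving f) {x : UnitAddCircle}
    (hx : f x = x) {B : Set UnitAddCircle} (hB : B.Finite) (hmaps : MapsTo f B B)
    {b : UnitAddCircle} (hb : b ∈ B) : f b = b := by
  obtain ⟨a, -, rfl⟩ := x.eq_coe_Ico
  obtain ⟨G, hG, hG1, hfG, hGa⟩ := hf.exists_lift_fixing hx
  set I := Ico a (a + 1)
  have hmapsI : MapsTo G I I := fun t ht =>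
    ⟨hGa ▸ hG.monotone ht.1, by simpa only [hG1, hGa] using hG ht.2⟩
  have hinj : InjOn ((↑) : ℝ → UnitAddCircle) I := fun u hu v hv =>
    (AddCircle.coe_eq_coe_iff_of_mem_Ico hu hv).mp
  set S := I ∩ (↑) ⁻¹' B
  have hS : S.Finite := Set.Finite.of_finite_image
    (hB.subset (image_subset_iff.2 inter_subset_right)) (hinj.mono inter_subset_left)
  have hmapsS : MapsTo G S S := fun t ht =>
    ⟨hmapsI ht.1, by simpa only [mem_preimage, hfG] using hmaps ht.2⟩
  obtain ⟨t, ht, rfl⟩ : b ∈ ((↑) : ℝ → UnitAddCircle) '' I := by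
    rw [AddCircle.coe_image_Ico_eq]; trivial
  rw [hfG, (hG.strictMonoOn S).eq_self_of_mapsTo hS hmapsS ⟨ht, hb⟩]

end OrientationPreserving

section orbitOf

variable {H : Subgroup (UnitAddCircle ≃ₜ UnitAddCircle)}

theorem orbitOf_eq_range (x : UnitAddCircle) :
    orbitOf H x = range fun h : H => (h : UnitAddCircle ≃ₜ UnitAddCircle) x := by
  ext y
  simp [orbitOf]

theorem mapsTo_orbitOf {h : UnitAddCircle ≃ₜ UnitAddCircle} (hh : h ∈ H) (x : UnitAddCircle) :
    MapsTo h (orbitOf H x) (orbitOf H x) := by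
  rintro - ⟨g, hg, rfl⟩
  exact ⟨h * g, mul_mem hh hg, rfl⟩

theorem apply_eq_apply_of_finite_orbitOf (hop : ∀ h ∈ H, OrientationPreserving h)
    {x y : UnitAddCircle} (hy : (orbitOf H y).Finite) {g h : UnitAddCircle ≃ₜ UnitAddCircle}
    (hg : g ∈ H) (hh : h ∈ H) (hgh : g x = h x) : g y = h y := by
  have hk : h⁻¹ * g ∈ H := mul_mem (inv_mem hh) hg
  have hkx : (h⁻¹ * g) x = x := h.symm_apply_eq.mpr hgh
  have hky : (h⁻¹ * g) y = y :=
    (hop _ hk).apply_eq_self_of_mapsTo hkx hy (mapsTo_orbitOf hk y) ⟨1, one_mem H, rfl⟩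
  exact h.symm_apply_eq.mp hky

end orbitOf

theorem finite_orbits_same_card_general (H : Subgroup (UnitAddCircle ≃ₜ UnitAddCircle))
    (hop : ∀ h ∈ H, OrientationPreserving h) :
    ∀ x y : UnitAddCircle, (orbitOf H x).Finite → (orbitOf H y).Finite →
      (orbitOf H x).ncard = (orbitOf H y).ncard := by
  intro x y hx hy
  rw [orbitOf_eq_range, orbitOf_eq_range]
  exact ncard_range_eq_of_apply_eq_iff fun g h =>
    ⟨apply_eq_apply_of_finite_orbitOf hop hy g.2 h.2,
      apply_eq_apply_of_finite_orbitOf hop hx g.2 h.2⟩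

/-- If a subgroup `H` of the orientation-preserving homeomorphisms of the circle has a
finite orbit, then all finite orbits of `H` have the same cardinality. -/
theorem finite_orbits_same_card (H : Subgroup (UnitAddCircle ≃ₜ UnitAddCircle))
    (hop : ∀ h ∈ H, OrientationPreserving h)
    (hper : ∃ x : UnitAddCircle, (orbitOf H x).Finite) :
    ∀ x y : UnitAddCircle, (orbitOf H x).Finite → (orbitOf H y).Finite →
      (orbitOf H x).ncard = (orbitOf H y).ncard :=
  finite_orbits_same_card_general H hop
end

section
/- Let H be a subgroup of Homeo₊(S¹) and f ∈ Homeo₊(S¹) commuting with every element of H. If both H and f have periodic points (P(H) ≠ ∅ and P(f) ≠ ∅), then P(H) ∩ P(f) ≠ ∅, and the group generated by f together with H has a finite orbit. -/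
namespace PeriodicCommutingAux

abbrev Homeo := UnitAddCircle ≃ₜ UnitAddCircle

lemma hmul_apply (g h : Homeo) (x : UnitAddCircle) : (g * h) x = g (h x) := rfl

lemma fix_zpow (g : Homeo) (w : UnitAddCircle) (hw : g w = w) (n : ℤ) : (g ^ n) w = w := by
  have hinv : g⁻¹ w = w := by
    conv_lhs => rw [← hw]
    exact g.symm_apply_apply w
  induction n using Int.induction_on with
  | zero => rfl
  | succ n ih => rw [show g ^ ((n : ℤ) + 1) = g * g ^ (n : ℤ) by group, hmul_apply, ih, hw]
  | pred n ih => rw [show g ^ (-(n : ℤ) - 1) = g⁻¹ * g ^ (-(n : ℤ)) by group, hmul_apply, ih, hinv]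

lemma zpow_emod_apply (f : Homeo) (q k : ℤ) (w : UnitAddCircle) (hw : (f ^ q) w = w) :
    (f ^ k) w = (f ^ (k % q)) w := by
  conv_lhs => rw [← Int.emod_add_mul_ediv k q]
  rw [show f ^ (k % q + q * (k / q)) = f ^ (k % q) * (f ^ q) ^ (k / q) by
    rw [zpow_add, zpow_mul], hmul_apply, fix_zpow _ _ hw]

lemma fin_forbit (f : Homeo) (q : ℤ) (hq : 0 < q) (w : UnitAddCircle) (hw : (f ^ q) w = w) :
    (Set.range fun k : ℤ => (f ^ k) w).Finite := by
  apply Set.Finite.subset (Set.Finite.image (fun r : ℤ => (f ^ r) w) (Set.finite_Ico 0 q))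
  rintro _ ⟨k, rfl⟩
  exact ⟨k % q, ⟨Int.emod_nonneg k hq.ne', Int.emod_lt_of_pos k hq⟩,
    (zpow_emod_apply f q k w hw).symm⟩

lemma coe_eq_exists (u v : ℝ) (h : (u : UnitAddCircle) = v) : ∃ n : ℤ, u = v + n := by
  rw [QuotientAddGroup.eq_iff_sub_mem, AddSubgroup.mem_zmultiples_iff] at h
  obtain ⟨k, hk⟩ := h
  rw [zsmul_eq_mul, mul_one] at hk
  exact ⟨k, by linarith⟩

lemma coe_shift (t : ℝ) (n : ℤ) : ((t + n : ℝ) : UnitAddCircle) = (t : UnitAddCircle) := by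
  simp

end PeriodicCommutingAux

open PeriodicCommutingAux in
/-- If `f` is an orientation-preserving homeomorphism of the circle commuting with every
element of a subgroup `H` of orientation-preserving homeomorphisms, and both `H` and `f`
have periodic points, then `P(H) ∩ P(f) ≠ ∅` and the group `⟨f, H⟩` generated by `f`
together with `H` has a finite orbit. -/
theorem periodic_of_commuting (H : Subgroup (UnitAddCircle ≃ₜ UnitAddCircle))
    (hop : ∀ h ∈ H, OrientationPreserving h)
    (f : UnitAddCircle ≃ₜ UnitAddCircle) (hfop : OrientationPreserving f)
    (hcomm : ∀ h ∈ H, ⇑f ∘ ⇑h = ⇑h ∘ ⇑f)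
    (hPH : ∃ x : UnitAddCircle, (orbitOf H x).Finite)
    (hPf : ∃ x : UnitAddCircle, (Set.range fun k : ℤ => (f ^ k) x).Finite) :
    (∃ x : UnitAddCircle, (orbitOf H x).Finite ∧
        (Set.range fun k : ℤ => (f ^ k) x).Finite) ∧
      ∃ x : UnitAddCircle,
        (orbitOf (Subgroup.closure (insert f (H : Set (UnitAddCircle ≃ₜ UnitAddCircle)))) x).Finite := by
  classical
  obtain ⟨x, hx⟩ := hPH
  obtain ⟨y0, hy0⟩ := hPf
  -- extract a positive period q and a fixed point y of f ^ q
  have hninj : ¬ Function.Injective (fun k : ℤ => (f ^ k) y0) := fun hinj =>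
    (Set.infinite_range_of_injective hinj) hy0
  rw [Function.not_injective_iff] at hninj
  obtain ⟨a, b, hab, hne⟩ := hninj
  have hw : (f ^ (a - b)) ((f ^ b) y0) = (f ^ b) y0 := by
    rw [← hmul_apply, ← zpow_add, show a - b + b = a by ring, hab]
  set y : UnitAddCircle := (f ^ b) y0 with hy
  set q : ℤ := (a - b) * (a - b) with hqdef
  have hq : 0 < q := mul_self_pos.mpr (sub_ne_zero.mpr hne)
  have hyq : (f ^ q) y = y := by
    rw [hqdef, zpow_mul]
    exact fix_zpow _ _ hw _
  -- the closed set K of fixed points of f ^ q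
  set K : Set UnitAddCircle := {w | (f ^ q) w = w} with hK
  have hKy : y ∈ K := hyq
  have hKclosed : IsClosed K := isClosed_eq (f ^ q).continuous continuous_id
  -- commutation facts
  have commf : ∀ h ∈ H, Commute f h := by
    intro h hH
    ext z
    exact congrFun (hcomm h hH) z
  have hKinv : ∀ h ∈ H, ∀ w ∈ K, h w ∈ K := by
    intro h hH w hwK
    have hcq : f ^ q * h = h * f ^ q := ((commf h hH).zpow_left q).eq
    show (f ^ q) (h w) = h w
    calc (f ^ q) (h w) = (f ^ q * h) w := rfl
      _ = (h * f ^ q) w := by rw [hcq]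
      _ = h ((f ^ q) w) := rfl
      _ = h w := by rw [hwK]
  -- the lifted set
  set Kt : Set ℝ := (fun r : ℝ => (r : UnitAddCircle)) ⁻¹' K with hKt
  have hKtclosed : IsClosed Kt := hKclosed.preimage (AddCircle.continuous_mk' 1)
  have hKtint : ∀ (t : ℝ) (n : ℤ), t ∈ Kt → t + (n : ℝ) ∈ Kt := by
    intro t n ht
    show ((t + n : ℝ) : UnitAddCircle) ∈ K
    rw [coe_shift]
    exact ht
  obtain ⟨s0, hs0⟩ : ∃ s0 : ℝ, (s0 : UnitAddCircle) = y := Quotient.exists_rep y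
  have hs0K : s0 ∈ Kt := by
    show (s0 : UnitAddCircle) ∈ K
    rw [hs0]; exact hKy
  have hKtne : ∀ r : ℝ, (Kt ∩ Set.Iic r).Nonempty := by
    intro r
    refine ⟨s0 + ((-⌈s0 - r⌉ : ℤ) : ℝ), hKtint s0 _ hs0K, ?_⟩
    have := Int.le_ceil (s0 - r)
    push_cast
    simp only [Set.mem_Iic]
    linarith
  have hbdd : ∀ r : ℝ, BddAbove (Kt ∩ Set.Iic r) := fun r => ⟨r, fun t ht => ht.2⟩
  have hmem : ∀ r : ℝ, sSup (Kt ∩ Set.Iic r) ∈ Kt ∩ Set.Iic r := fun r =>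
    (hKtclosed.inter isClosed_Iic).csSup_mem (hKtne r) (hbdd r)
  have hgreat : ∀ r : ℝ, IsGreatest (Kt ∩ Set.Iic r) (sSup (Kt ∩ Set.Iic r)) := fun r =>
    ⟨hmem r, fun t ht => le_csSup (hbdd r) ht⟩
  -- integer shift of the sup
  have hshift : ∀ (r : ℝ) (n : ℤ),
      sSup (Kt ∩ Set.Iic (r + (n : ℝ))) = sSup (Kt ∩ Set.Iic r) + (n : ℝ) := by
    intro r n
    refine IsGreatest.csSup_eq ⟨⟨hKtint _ n (hmem r).1, Set.mem_Iic.mpr (add_le_add_left (Set.mem_Iic.mp (hmem r).2) _)⟩, ?_⟩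
    intro t ht
    have h1 : t + ((-n : ℤ) : ℝ) ∈ Kt := hKtint t (-n) ht.1
    have h2 : t + ((-n : ℤ) : ℝ) ≤ r := by
      have := ht.2
      push_cast
      simp only [Set.mem_Iic] at this
      linarith
    have := (hgreat r).2 ⟨h1, h2⟩
    push_cast at this
    linarith
  -- well-definedness modulo ℤ
  have hwd : ∀ r r' : ℝ, (r : UnitAddCircle) = (r' : UnitAddCircle) →
      ((sSup (Kt ∩ Set.Iic r) : ℝ) : UnitAddCircle) =
        ((sSup (Kt ∩ Set.Iic r') : ℝ) : UnitAddCircle) := by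
    intro r r' hrr
    obtain ⟨n, rfl⟩ := coe_eq_exists r r' hrr
    rw [hshift r' n, coe_shift]
  -- the master equivariance property
  have master : ∀ h, h ∈ H → ∀ r : ℝ, ∃ r' : ℝ,
      (r' : UnitAddCircle) = h (r : UnitAddCircle) ∧
        h ((sSup (Kt ∩ Set.Iic r) : ℝ) : UnitAddCircle) =
          ((sSup (Kt ∩ Set.Iic r') : ℝ) : UnitAddCircle) := by
    intro h hH r
    obtain ⟨F, hFmono, hF1, hFlift⟩ := hop h hH
    obtain ⟨G, _, _, hGlift⟩ := hop h⁻¹ (H.inv_mem hH)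
    have hFint : ∀ (n : ℤ) (t : ℝ), F (t + (n : ℝ)) = F t + (n : ℝ) := by
      intro n
      induction n using Int.induction_on with
      | zero => simp
      | succ m ih =>
        intro t
        have h1 := hF1 (t + (m : ℝ))
        have h2 := ih t
        push_cast
        push_cast at h1 h2
        rw [show t + ((m : ℝ) + 1) = t + (m : ℝ) + 1 by ring, h1, h2]
        ring
      | pred m ih =>
        intro t
        have h1 := hF1 (t + (-(m : ℝ) - 1))
        have h2 := ih t
        push_cast
        push_cast at h1 h2
        rw [show t + (-(m : ℝ) - 1) + 1 = t + -(m : ℝ) by ring] at h1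
        rw [show t + (-(m : ℝ) - 1) = t + (-(m : ℝ) - 1) by ring]
        linarith
    have hFKt : ∀ t, t ∈ Kt → F t ∈ Kt := by
      intro t ht
      show ((F t : ℝ) : UnitAddCircle) ∈ K
      rw [← hFlift t]
      exact hKinv h hH _ ht
    have hFsurjK : ∀ t : ℝ, t ∈ Kt → ∃ s, s ∈ Kt ∧ F s = t := by
      intro t ht
      have h1 : ((G t : ℝ) : UnitAddCircle) = h⁻¹ (t : UnitAddCircle) := (hGlift t).symm
      have hGtK : G t ∈ Kt := by
        show ((G t : ℝ) : UnitAddCircle) ∈ K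
        rw [h1]
        exact hKinv h⁻¹ (H.inv_mem hH) _ ht
      have h2 : ((F (G t) : ℝ) : UnitAddCircle) = (t : UnitAddCircle) := by
        rw [← hFlift (G t), h1]
        exact h.apply_symm_apply _
      obtain ⟨n, hn⟩ := coe_eq_exists _ _ h2
      refine ⟨G t + ((-n : ℤ) : ℝ), hKtint _ _ hGtK, ?_⟩
      rw [hFint (-n) (G t)]
      push_cast
      push_cast at hn
      linarith
    have key : F (sSup (Kt ∩ Set.Iic r)) = sSup (Kt ∩ Set.Iic (F r)) := by
      symm
      apply IsGreatest.csSup_eq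
      constructor
      · exact ⟨hFKt _ (hmem r).1, hFmono.monotone (hmem r).2⟩
      · rintro t ⟨htK, htr⟩
        obtain ⟨s, hsK, rfl⟩ := hFsurjK t htK
        exact hFmono.monotone ((hgreat r).2 ⟨hsK, hFmono.le_iff_le.1 htr⟩)
    exact ⟨F r, (hFlift r).symm, by rw [hFlift, key]⟩
  -- the common periodic point z
  obtain ⟨xt, hxt⟩ : ∃ xt : ℝ, (xt : UnitAddCircle) = x := Quotient.exists_rep x
  set z : UnitAddCircle := ((sSup (Kt ∩ Set.Iic xt) : ℝ) : UnitAddCircle) with hz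
  have hzK : z ∈ K := (hmem xt).1
  -- lift map via choice
  have πsurj : Function.Surjective (fun r : ℝ => (r : UnitAddCircle)) := fun w =>
    Quotient.exists_rep w
  set ℓ : UnitAddCircle → ℝ := Function.surjInv πsurj with hℓ
  have hℓπ : ∀ w, ((ℓ w : ℝ) : UnitAddCircle) = w := fun w => Function.surjInv_eq πsurj w
  set A : UnitAddCircle → UnitAddCircle :=
    fun w => ((sSup (Kt ∩ Set.Iic (ℓ w)) : ℝ) : UnitAddCircle) with hA
  have horbz : (orbitOf H z).Finite := by
    apply (hx.image A).subset
    rintro _ ⟨h, hH, rfl⟩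
    obtain ⟨r', hr', heq⟩ := master h hH xt
    refine ⟨h x, ⟨h, hH, rfl⟩, ?_⟩
    show ((sSup (Kt ∩ Set.Iic (ℓ (h x))) : ℝ) : UnitAddCircle) = h z
    rw [hz, heq]
    apply hwd
    rw [hℓπ, hr', hxt]
  have hzf : (Set.range fun k : ℤ => (f ^ k) z).Finite := fin_forbit f q hq z hzK
  refine ⟨⟨z, horbz, hzf⟩, ⟨z, ?_⟩⟩
  -- every element of the closure has the form f ^ k * h
  set S : Subgroup Homeo :=
    { carrier := {g | ∃ k : ℤ, ∃ h ∈ H, g = f ^ k * h}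
      one_mem' := ⟨0, 1, H.one_mem, by group⟩
      mul_mem' := by
        rintro g g' ⟨k, h, hH, rfl⟩ ⟨j, h', hH', rfl⟩
        refine ⟨k + j, h * h', H.mul_mem hH hH', ?_⟩
        have hc : f ^ j * h = h * f ^ j := ((commf h hH).zpow_left j).eq
        calc f ^ k * h * (f ^ j * h') = f ^ k * (h * f ^ j) * h' := by group
          _ = f ^ k * (f ^ j * h) * h' := by rw [hc]
          _ = f ^ (k + j) * (h * h') := by rw [zpow_add]; group
      inv_mem' := by
        rintro g ⟨k, h, hH, rfl⟩
        refine ⟨-k, h⁻¹, H.inv_mem hH, ?_⟩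
        have hc : f ^ (-k) * h⁻¹ = h⁻¹ * f ^ (-k) := (((commf h hH).zpow_left (-k)).inv_right).eq
        rw [mul_inv_rev, ← zpow_neg, ← hc] } with hS
  have hclos : Subgroup.closure (insert f (H : Set Homeo)) ≤ S := by
    rw [Subgroup.closure_le]
    rintro g hg
    rcases hg with rfl | hgH
    · exact ⟨1, 1, H.one_mem, by group⟩
    · exact ⟨0, g, hgH, by group⟩
  apply Set.Finite.subset
    (((Set.finite_Ico (0 : ℤ) q).prod horbz).image fun p : ℤ × UnitAddCircle => (f ^ p.1) p.2)
  rintro _ ⟨g, hg, rfl⟩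
  obtain ⟨k, h, hH, rfl⟩ := hclos hg
  refine ⟨(k % q, h z), ⟨⟨Int.emod_nonneg k hq.ne', Int.emod_lt_of_pos k hq⟩, ⟨h, hH, rfl⟩⟩, ?_⟩
  show (f ^ (k % q)) (h z) = (f ^ k * h) z
  calc (f ^ (k % q)) (h z) = (f ^ (k % q) * h) z := rfl
    _ = (h * f ^ (k % q)) z := by rw [((commf h hH).zpow_left (k % q)).eq]
    _ = h ((f ^ (k % q)) z) := rfl
    _ = h ((f ^ k) z) := by rw [← zpow_emod_apply f q k z hzK]
    _ = (h * f ^ k) z := rfl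
    _ = (f ^ k * h) z := by rw [← ((commf h hH).zpow_left k).eq]
end

section
/- Let H be a topologically transitive subgroup of Homeo₊(ℝ) isomorphic to ℤ². Then H is minimal, i.e., every orbit of H is dense in ℝ. -/
/-- A subgroup of the homeomorphism group is topologically transitive if some element
maps any given nonempty open set to meet any other given nonempty open set. -/
def TopTransitive {X : Type*} [TopologicalSpace X] (G : Subgroup (X ≃ₜ X)) : Prop :=
  ∀ U V : Set X, IsOpen U → IsOpen V → U.Nonempty → V.Nonempty →
    ∃ g ∈ G, (⇑g '' U ∩ V).Nonempty

open Set Subgroup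

instance Homeomorph.applyMulAction {X : Type*} [TopologicalSpace X] : MulAction (X ≃ₜ X) X where
  smul f x := f x
  one_smul _ := rfl
  mul_smul _ _ _ := rfl

section Transitivity

variable {X : Type*} [TopologicalSpace X]

def TopTransitiveOn (G : Set (X ≃ₜ X)) (s : Set X) : Prop :=
  ∀ U V : Set X, IsOpen U → IsOpen V → U.Nonempty → V.Nonempty → U ⊆ s → V ⊆ s →
    ∃ g ∈ G, (⇑g '' U ∩ V).Nonempty

theorem mapsTo_closure_orbit (H : Subgroup (X ≃ₜ X)) (x : X) {g : X ≃ₜ X} (hg : g ∈ H) :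
    MapsTo g (closure {y | ∃ h ∈ H, h x = y}) (closure {y | ∃ h ∈ H, h x = y}) :=
  MapsTo.closure (fun _ ⟨h, hh, hy⟩ => ⟨g * h, H.mul_mem hg hh, hy ▸ rfl⟩) g.continuous

end Transitivity

section LinearOrder

variable {X : Type*} [TopologicalSpace X] [LinearOrder X]

variable (X) in
def orientationPreserving : Subgroup (X ≃ₜ X) where
  carrier := {f | StrictMono f}
  mul_mem' hf hg := hf.comp hg
  one_mem' := strictMono_id
  inv_mem' {f} hf _ _ hxy := hf.lt_iff_lt.1 (by simpa using hxy)

theorem TopTransitive.exists_apply_ne [OrderClosedTopology X] [NoMinOrder X] [NoMaxOrder X]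
    {H : Subgroup (X ≃ₜ X)} (htrans : TopTransitive H) (hop : H ≤ orientationPreserving X)
    (c : X) : ∃ g ∈ H, g c ≠ c := by
  obtain ⟨g, hg, _, ⟨u, hu, rfl⟩, hgu⟩ :=
    htrans (Iio c) (Ioi c) isOpen_Iio isOpen_Ioi nonempty_Iio nonempty_Ioi
  exact ⟨g, hg, fun hgc => hgu.not_gt (hgc ▸ hop hg hu)⟩

variable {f : X ≃ₜ X}

theorem lt_inv_apply_of_apply_lt (hf : f ∈ orientationPreserving X) {x : X} (h : f x < x) :
    x < f⁻¹ x := by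
  simpa using inv_mem hf h

theorem strictMono_zpow_apply (hf : f ∈ orientationPreserving X) {x : X} (h : x < f x) :
    StrictMono fun n : ℤ => (f ^ n) x :=
  strictMono_int_of_lt_succ fun n => by simpa [zpow_add_one] using zpow_mem hf n h

theorem apply_eq_of_zpow_apply_eq (hf : f ∈ orientationPreserving X) {x : X} {n : ℤ}
    (hn : n ≠ 0) (h : (f ^ n) x = x) : f x = x := by
  rcases lt_trichotomy (f x) x with hlt | heq | hgt
  · have := (strictMono_zpow_apply (inv_mem hf) (lt_inv_apply_of_apply_lt hf hlt)).injective
      (a₁ := -n) (a₂ := 0) (by simpa [inv_zpow'] using h)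
    omega
  · exact heq
  · exact absurd ((strictMono_zpow_apply hf hgt).injective (a₁ := n) (a₂ := 0)
      (by simpa using h)) hn

theorem zpow_apply_notMem_Ioo (hf : f ∈ orientationPreserving X) {t s u : X} (ht : t < f t)
    (hu : u ∈ Ioo t s) (n : ℤ) : (f ^ n) u ∉ Ioo s (f t) := by
  rintro ⟨hsu, hut⟩
  have hmono := strictMono_zpow_apply hf ht
  rcases lt_trichotomy n 0 with hn | rfl | hn
  · have h1 : (f ^ n) u < (f ^ (n + 1)) t := by
      rw [zpow_add_one, Homeomorph.mul_apply]
      exact zpow_mem hf n (hu.2.trans (hsu.trans hut))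
    have h2 : (f ^ (n + 1)) t ≤ (f ^ (0 : ℤ)) t := hmono.monotone (by omega)
    rw [zpow_zero, Homeomorph.one_apply] at h2
    exact (h1.trans_le h2).not_gt (hu.1.trans (hu.2.trans hsu))
  · exact hu.2.not_gt (by simpa using hsu)
  · have h2 : (f ^ (1 : ℤ)) t ≤ (f ^ n) t := hmono.monotone (by omega)
    rw [zpow_one] at h2
    exact hut.not_ge (h2.trans (zpow_mem hf n hu.1).le)

variable [OrderClosedTopology X] [DenselyOrdered X]

theorem not_topTransitiveOn_zpowers_of_lt_apply (hf : f ∈ orientationPreserving X) {a b t : X}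
    (ht : t ∈ Ioo a b) (hft : t < f t) : ¬TopTransitiveOn (zpowers f) (Ioo a b) := by
  obtain ⟨s, hts, hs⟩ := exists_between (lt_min hft ht.2)
  intro htr
  obtain ⟨g, hg, _, ⟨u, hu, rfl⟩, hgu⟩ := htr (Ioo t s) (Ioo s (min (f t) b)) isOpen_Ioo
    isOpen_Ioo (nonempty_Ioo.2 hts) (nonempty_Ioo.2 hs)
    (Ioo_subset_Ioo ht.1.le (hs.le.trans (min_le_right _ _)))
    (Ioo_subset_Ioo (ht.1.trans hts).le (min_le_right _ _))
  obtain ⟨n, rfl⟩ := mem_zpowers_iff.1 hg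
  exact zpow_apply_notMem_Ioo hf hft hu n ⟨hgu.1, hgu.2.trans_le (min_le_left _ _)⟩

theorem not_topTransitiveOn_zpowers (hf : f ∈ orientationPreserving X) {a b : X} (hab : a < b) :
    ¬TopTransitiveOn (zpowers f) (Ioo a b) := by
  obtain ⟨t, ht⟩ := exists_between hab
  rcases lt_trichotomy (f t) t with hlt | heq | hgt
  · rw [← zpowers_inv]
    exact not_topTransitiveOn_zpowers_of_lt_apply (inv_mem hf) ht (lt_inv_apply_of_apply_lt hf hlt)
  · intro htr
    obtain ⟨g, hg, _, ⟨u, hu, rfl⟩, hgu⟩ := htr (Ioo a t) (Ioo t b) isOpen_Ioo isOpen_Ioo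
      (nonempty_Ioo.2 ht.1) (nonempty_Ioo.2 ht.2) (Ioo_subset_Ioo_right ht.2.le)
      (Ioo_subset_Ioo_left ht.1.le)
    have hgt : g t = t := (zpowers_le.2 (MulAction.mem_stabilizer_iff.2 heq)) hg
    exact hgu.1.not_gt (hgt ▸ zpowers_le.2 hf hg hu.2)
  · exact not_topTransitiveOn_zpowers_of_lt_apply hf ht hgt

end LinearOrder

section Gap

variable {X : Type*} [LinearOrder X]

structure IsGap (D : Set X) (a b : X) : Prop where
  left_mem : a ∈ D
  right_mem : b ∈ D
  lt : a < b
  disjoint : Disjoint (Ioo a b) D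

variable {D : Set X} {a b : X}

theorem IsGap.eq_of_inter_nonempty {a' b' : X} (h : IsGap D a b) (h' : IsGap D a' b')
    (hne : (Ioo a b ∩ Ioo a' b').Nonempty) : a = a' ∧ b = b' := by
  obtain ⟨z, ⟨haz, hzb⟩, ha'z, hzb'⟩ := hne
  refine ⟨le_antisymm ?_ ?_, le_antisymm ?_ ?_⟩ <;> refine not_lt.1 fun hlt => ?_
  · exact disjoint_left.1 h'.disjoint ⟨hlt, haz.trans hzb'⟩ h.left_mem
  · exact disjoint_left.1 h.disjoint ⟨hlt, ha'z.trans hzb⟩ h'.left_mem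
  · exact disjoint_left.1 h.disjoint ⟨haz.trans hzb', hlt⟩ h'.right_mem
  · exact disjoint_left.1 h'.disjoint ⟨ha'z.trans hzb, hlt⟩ h.right_mem

variable [TopologicalSpace X]

theorem IsGap.image {g : X ≃ₜ X} (h : IsGap D a b) (hg : g ∈ orientationPreserving X)
    (hD : MapsTo g D D) (hD' : MapsTo ⇑g⁻¹ D D) : IsGap D (g a) (g b) where
  left_mem := hD h.left_mem
  right_mem := hD h.right_mem
  lt := hg h.lt
  disjoint := disjoint_left.2 fun z hz hzD => disjoint_left.1 h.disjoint
    ⟨by simpa using inv_mem hg hz.1, by simpa using inv_mem hg hz.2⟩ (hD' hzD)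

theorem TopTransitive.topTransitiveOn_isGap {H : Subgroup (X ≃ₜ X)} (htrans : TopTransitive H)
    (hop : H ≤ orientationPreserving X) (hD : ∀ g ∈ H, MapsTo g D D) (hgap : IsGap D a b) :
    TopTransitiveOn ↑(MulAction.stabilizer (X ≃ₜ X) a ⊓ H) (Ioo a b) := by
  intro U V hU hV hUne hVne hUs hVs
  obtain ⟨g, hg, _, ⟨u, hu, rfl⟩, hgu⟩ := htrans U V hU hV hUne hVne
  have hga : g a = a := ((hgap.image (hop hg) (hD g hg) (hD _ (inv_mem hg))).eq_of_inter_nonempty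
    hgap ⟨g u, ⟨hop hg (hUs hu).1, hop hg (hUs hu).2⟩, hVs hgu⟩).1
  exact ⟨g, ⟨hga, hg⟩, _, ⟨u, hu, rfl⟩, hgu⟩

end Gap

section ConditionallyComplete

variable {X : Type*} [ConditionallyCompleteLinearOrder X] [TopologicalSpace X] [OrderTopology X]
  {D : Set X}

theorem apply_csSup_eq {g : X ≃ₜ X} (hg : g ∈ orientationPreserving X) (hD : IsClosed D)
    (hne : D.Nonempty) (hbdd : BddAbove D) (hmaps : MapsTo g D D) (hmaps' : MapsTo ⇑g⁻¹ D D) :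
    g (sSup D) = sSup D := by
  have hmem := hD.csSup_mem hne hbdd
  refine le_antisymm (le_csSup hbdd (hmaps hmem)) ?_
  simpa using hg.monotone (le_csSup hbdd (hmaps' hmem))

theorem apply_csInf_eq {g : X ≃ₜ X} (hg : g ∈ orientationPreserving X) (hD : IsClosed D)
    (hne : D.Nonempty) (hbdd : BddBelow D) (hmaps : MapsTo g D D) (hmaps' : MapsTo ⇑g⁻¹ D D) :
    g (sInf D) = sInf D := by
  have hmem := hD.csInf_mem hne hbdd
  refine le_antisymm ?_ (csInf_le hbdd (hmaps hmem))
  simpa using hg.monotone (csInf_le hbdd (hmaps' hmem))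

theorem exists_isGap_of_notMem {p : X} (hD : IsClosed D) (hp : p ∉ D) (hlo : ∃ z ∈ D, z < p)
    (hhi : ∃ z ∈ D, p < z) : ∃ a b, IsGap D a b := by
  obtain ⟨z, hz, hzp⟩ := hlo
  obtain ⟨w, hw, hpw⟩ := hhi
  have hbdd : BddAbove (D ∩ Iic p) := ⟨p, fun _ h => h.2⟩
  have hbdd' : BddBelow (D ∩ Ici p) := ⟨p, fun _ h => h.2⟩
  obtain ⟨haD, hap⟩ := (hD.inter isClosed_Iic).csSup_mem ⟨z, hz, hzp.le⟩ hbdd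
  obtain ⟨hbD, hpb⟩ := (hD.inter isClosed_Ici).csInf_mem ⟨w, hw, hpw.le⟩ hbdd'
  refine ⟨_, _, haD, hbD, (hap.lt_of_ne (ne_of_mem_of_not_mem haD hp)).trans_le hpb,
    disjoint_left.2 fun y ⟨hay, hyb⟩ hyD => ?_⟩
  rcases le_total y p with hyp | hpy
  · exact hay.not_ge (le_csSup hbdd ⟨hyD, hyp⟩)
  · exact hyb.not_ge (csInf_le hbdd' ⟨hyD, hpy⟩)

theorem exists_isGap_of_invariant {H : Subgroup (X ≃ₜ X)} (hop : H ≤ orientationPreserving X)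
    (hfix : ∀ c, ∃ g ∈ H, g c ≠ c) (hD : IsClosed D) (hmaps : ∀ g ∈ H, MapsTo g D D)
    (hne : D.Nonempty) {p : X} (hp : p ∉ D) : ∃ a b, IsGap D a b := by
  refine exists_isGap_of_notMem hD hp ?_ ?_ <;> by_contra! h
  · obtain ⟨g, hg, hgc⟩ := hfix (sInf D)
    exact hgc (apply_csInf_eq (hop hg) hD hne ⟨p, h⟩ (hmaps g hg) (hmaps _ (inv_mem hg)))
  · obtain ⟨g, hg, hgc⟩ := hfix (sSup D)
    exact hgc (apply_csSup_eq (hop hg) hD hne ⟨p, h⟩ (hmaps g hg) (hmaps _ (inv_mem hg)))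

end ConditionallyComplete

theorem Prod.eq_zero_of_dot_eq_zero_of_cross_eq_zero {R : Type*} [CommRing R] [LinearOrder R]
    [IsStrictOrderedRing R] {v w : R × R} (hw : w ≠ 0)
    (hdot : v.1 * w.1 + v.2 * w.2 = 0) (hcross : v.1 * w.2 - v.2 * w.1 = 0) : v = 0 := by
  have hnorm : w.1 ^ 2 + w.2 ^ 2 ≠ 0 := fun h =>
    hw (Prod.ext (by rw [Prod.fst_zero]; nlinarith) (by rw [Prod.snd_zero]; nlinarith))
  have h1 : v.1 * (w.1 ^ 2 + w.2 ^ 2) = 0 := by linear_combination w.1 * hdot + w.2 * hcross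
  have h2 : v.2 * (w.1 ^ 2 + w.2 ^ 2) = 0 := by linear_combination w.2 * hdot - w.1 * hcross
  exact Prod.ext (by simpa [hnorm] using h1) (by simpa [hnorm] using h2)

theorem isCyclic_or_exists_zpow_mem {G : Type*} [Group G] (e : G ≃* Multiplicative (ℤ × ℤ))
    (S : Subgroup G) : IsCyclic S ∨ ∀ g : G, ∃ n : ℤ, n ≠ 0 ∧ g ^ n ∈ S := by
  set v : G → ℤ × ℤ := fun g => (e g).toAdd
  have hv : ∀ g h, v g = v h → g = h := fun g h hgh =>
    e.injective (Multiplicative.toAdd.injective hgh)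
  by_cases hcross : ∃ s ∈ S, ∃ t ∈ S, (v s).1 * (v t).2 - (v s).2 * (v t).1 ≠ 0
  · obtain ⟨s, hs, t, ht, hne⟩ := hcross
    refine Or.inr fun g => ⟨_, hne, ?_⟩
    -- Cramer's rule
    convert S.mul_mem (S.zpow_mem hs ((v t).2 * (v g).1 - (v t).1 * (v g).2))
      (S.zpow_mem ht ((v s).1 * (v g).2 - (v s).2 * (v g).1)) using 1
    apply hv
    ext <;> simp [v] <;> ring
  push Not at hcross
  refine Or.inl ((S.bot_or_exists_ne_one).elim (fun hS => hS ▸ inferInstance) ?_)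
  rintro ⟨s, hs, hs1⟩
  have hvs : v s ≠ 0 := fun h => hs1 (hv s 1 (by simpa [v] using h))
  -- the dot product with `v s` is injective on `S`, as all of `S` is parallel to `v s`
  let dot : ℤ × ℤ →+ ℤ := (v s).1 • .fst ℤ ℤ + (v s).2 • .snd ℤ ℤ
  refine isCyclic_of_injective ((AddMonoidHom.toMultiplicative dot).comp
    (e.toMonoidHom.comp S.subtype)) ((injective_iff_map_eq_one _).2 fun t ht => ?_)
  refine Subtype.ext (hv _ _ ?_)
  simpa [v] using Prod.eq_zero_of_dot_eq_zero_of_cross_eq_zero hvs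
    (by simpa [dot, v] using congrArg Multiplicative.toAdd ht) (hcross t t.2 s hs)

/-- A topologically transitive subgroup of `Homeo₊(ℝ)` isomorphic to `ℤ²` is minimal:
every orbit is dense in `ℝ`. -/
theorem Z2_transitive_is_minimal (H : Subgroup (ℝ ≃ₜ ℝ))
    (hop : ∀ h ∈ H, StrictMono ⇑h)
    (hiso : Nonempty (H ≃* Multiplicative (ℤ × ℤ)))
    (htrans : TopTransitive H) :
    ∀ x : ℝ, Dense {y : ℝ | ∃ h ∈ H, h x = y} := by
  intro x
  obtain ⟨e⟩ := hiso
  have hop : H ≤ orientationPreserving ℝ := hop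
  set D := closure {y : ℝ | ∃ h ∈ H, h x = y}
  have hmaps : ∀ g ∈ H, MapsTo g D D := fun g hg => mapsTo_closure_orbit H x hg
  have hfix := htrans.exists_apply_ne hop
  rw [dense_iff_closure_eq]
  by_contra hD
  obtain ⟨p, hp⟩ := (ne_univ_iff_exists_notMem D).1 hD
  obtain ⟨a, b, hab⟩ := exists_isGap_of_invariant hop hfix isClosed_closure hmaps
    ⟨x, subset_closure ⟨1, H.one_mem, rfl⟩⟩ hp
  rcases isCyclic_or_exists_zpow_mem e ((MulAction.stabilizer _ a).subgroupOf H) with hcyc | hfin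
  · obtain ⟨f, hf⟩ := (Subgroup.isCyclic_iff_exists_zpowers_eq_top _).1 hcyc
    have hstab : zpowers (f : ℝ ≃ₜ ℝ) = MulAction.stabilizer _ a ⊓ H := by
      rw [← H.coe_subtype, ← MonoidHom.map_zpowers, hf, subgroupOf_map_subtype]
    refine not_topTransitiveOn_zpowers (hop f.2) hab.lt ?_
    rw [hstab]
    exact htrans.topTransitiveOn_isGap hop hmaps hab
  · obtain ⟨g, hg, hga⟩ := hfix a
    obtain ⟨n, hn, hgn⟩ := hfin ⟨g, hg⟩
    exact hga (apply_eq_of_zpow_apply_eq (hop hg) hn hgn)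
end

section
/- Let G be a topologically transitive subgroup of Homeo₊(ℝ) isomorphic to ℤⁿ with at most countably many nontransitive points (almost minimal). Then every topologically transitive subgroup H of G is also almost minimal, i.e., H has at most countably many nontransitive points. -/
open Set
open scoped DirectSum

namespace AMaux


private def padHom {k r : ℕ} (hkr : k ≤ r) : (Fin k → ℤ) →+ (Fin r → ℤ) where
  toFun v := fun i => if h : (i : ℕ) < k then v ⟨i, h⟩ else 0
  map_zero' := by funext i; simp
  map_add' v w := by funext i; by_cases h : (i : ℕ) < k <;> simp [h]

private lemma padHom_injective {k r : ℕ} (hkr : k ≤ r) : Function.Injective (padHom hkr) := by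
  intro v w hvw
  funext j
  have h := congrFun (congrArg (fun (u : (Fin r → ℤ)) => u) hvw) ⟨j.1, lt_of_lt_of_le j.2 hkr⟩
  simpa [padHom, j.2] using h

private theorem GTdich (r : ℕ) {A : Type*} [Group A]
    (f : A →* Multiplicative (Fin (r + 1) → ℤ)) (hf : Function.Injective f)
    (B : Subgroup A) :
    (∃ g : ↥B →* Multiplicative (Fin r → ℤ), Function.Injective g) ∨ Finite (A ⧸ B) := by
  classical
  set M := (Fin (r + 1) → ℤ) with hM
  let F : A → M := fun a => Multiplicative.toAdd (f a)
  have Fmul : ∀ a b : A, F (a * b) = F a + F b := by intro a b; simp [F]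
  have Fone : F 1 = 0 := by simp [F]
  have Finv : ∀ a : A, F a⁻¹ = - F a := by intro a; simp [F]
  have Finj : Function.Injective F := by
    intro a b hab
    apply hf
    have : Multiplicative.ofAdd (Multiplicative.toAdd (f a)) = Multiplicative.ofAdd (Multiplicative.toAdd (f b)) := by
      exact congrArg _ hab
    simpa using this
  let Bad : AddSubgroup M :=
    { carrier := {m | ∃ b ∈ B, F b = m}
      zero_mem' := ⟨1, B.one_mem, Fone⟩
      add_mem' := by rintro m m' ⟨b, hb, rfl⟩ ⟨c, hc, rfl⟩; exact ⟨b * c, B.mul_mem hb hc, Fmul b c⟩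
      neg_mem' := by rintro m ⟨b, hb, rfl⟩; exact ⟨b⁻¹, B.inv_mem hb, Finv b⟩ }
  let Bsub : Submodule ℤ M := AddSubgroup.toIntSubmodule Bad
  have memBsub : ∀ m : M, m ∈ Bsub ↔ ∃ b ∈ B, F b = m := fun m => Iff.rfl
  by_cases hfin : Finite (M ⧸ Bsub)
  · right
    have resp : ∀ a b : A, QuotientGroup.leftRel B a b →
        (Submodule.Quotient.mk (F a) : M ⧸ Bsub) = Submodule.Quotient.mk (F b) := by
      intro a b hab
      rw [QuotientGroup.leftRel_apply] at hab
      rw [Submodule.Quotient.eq]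
      refine (memBsub _).mpr ⟨(a⁻¹ * b)⁻¹, B.inv_mem hab, ?_⟩
      rw [Finv, Fmul, Finv]; abel
    let j : A ⧸ B → M ⧸ Bsub := Quotient.lift (fun a => Submodule.Quotient.mk (F a)) resp
    have hjinj : Function.Injective j := by
      intro x y
      induction x using Quotient.inductionOn' with
      | h a =>
      induction y using Quotient.inductionOn' with
      | h b =>
      intro hab
      have h1 : (Submodule.Quotient.mk (F a) : M ⧸ Bsub) = Submodule.Quotient.mk (F b) := hab
      rw [Submodule.Quotient.eq] at h1
      obtain ⟨c, hc, hFc⟩ := (memBsub _).mp h1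
      have hce : F c = F (b⁻¹ * a) := by rw [hFc, Fmul, Finv]; abel
      have hcb : c = b⁻¹ * a := Finj hce
      refine Quotient.sound' (QuotientGroup.leftRel_apply.mpr ?_)
      have : (b⁻¹ * a)⁻¹ ∈ B := by rw [← hcb]; exact B.inv_mem hc
      simpa using this
    exact Finite.of_injective j hjinj
  · left
    haveI : Module.Finite ℤ (M ⧸ Bsub) :=
      Module.Finite.of_surjective Bsub.mkQ (Submodule.Quotient.mk_surjective Bsub)
    haveI : AddGroup.FG (M ⧸ Bsub) := Module.Finite.iff_addGroup_fg.mp inferInstance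
    obtain ⟨n, ι, fι, p, hp, e, ⟨φ⟩⟩ := AddCommGroup.equiv_free_prod_directSum_zmod (M ⧸ Bsub)
    have hn : 0 < n := by
      rcases Nat.eq_zero_or_pos n with h0 | h
      · exfalso
        apply hfin
        subst h0
        haveI : ∀ i : ι, NeZero (p i ^ e i) := fun i => ⟨pow_ne_zero _ (hp i).ne_zero⟩
        haveI : Finite (⨁ i, ZMod (p i ^ e i)) :=
          Finite.of_equiv _ (DFinsupp.equivFunOnFintype).symm
        haveI : Finite (Fin 0 →₀ ℤ) := Finite.of_equiv _ (Finsupp.equivFunOnFinite).symm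
        exact Finite.of_equiv _ φ.symm.toEquiv
      · exact h
    let i0 : Fin n := ⟨0, hn⟩
    let ev : (Fin n →₀ ℤ) →+ ℤ := Finsupp.applyAddHom i0
    let χ : M →+ ℤ :=
      (ev.comp ((AddMonoidHom.fst _ _).comp φ.toAddMonoidHom)).comp Bsub.mkQ.toAddMonoidHom
    obtain ⟨m₀, hm₀⟩ := Submodule.Quotient.mk_surjective Bsub (φ.symm (Finsupp.single i0 1, 0))
    have hχm₀ : χ m₀ = 1 := by
      show ev ((φ (Bsub.mkQ m₀)).1) = 1
      have : Bsub.mkQ m₀ = φ.symm (Finsupp.single i0 1, 0) := hm₀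
      rw [this, AddEquiv.apply_symm_apply]
      simp [ev]
    let χL : M →ₗ[ℤ] ℤ := χ.toIntLinearMap
    have hχLm₀ : χL m₀ = 1 := hχm₀
    have hBK0 : ∀ m ∈ Bsub, χL m = 0 := by
      intro m hm
      show χ m = 0
      have : Bsub.mkQ m = 0 := by
        simpa [Submodule.mkQ_apply] using (Submodule.Quotient.mk_eq_zero Bsub).mpr hm
      show ev ((φ (Bsub.mkQ m)).1) = 0
      rw [this]
      simp
    obtain ⟨k, bK⟩ := Submodule.basisOfPid (Pi.basisFun ℤ (Fin (r + 1))) (LinearMap.ker χL)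
    let Ψ : (↥(LinearMap.ker χL) × ℤ) →ₗ[ℤ] M :=
      (LinearMap.ker χL).subtype.comp (LinearMap.fst ℤ _ _)
        + (LinearMap.toSpanSingleton ℤ M m₀).comp (LinearMap.snd ℤ _ _)
    have hΨapp : ∀ x : (↥(LinearMap.ker χL) × ℤ), Ψ x = (x.1 : M) + x.2 • m₀ := by
      intro x; rfl
    have hΨ : LinearMap.ker Ψ = ⊥ := by
      rw [LinearMap.ker_eq_bot']
      rintro ⟨x, t⟩ hx
      rw [hΨapp] at hx
      have h2 : χL ((x : M) + t • m₀) = 0 := by rw [hx]; simp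
      rw [map_add, map_smul] at h2
      have h3 : χL (x : M) = 0 := x.2
      rw [h3, hχLm₀] at h2
      have ht : t = 0 := by simpa using h2
      subst ht
      have : (x : M) = 0 := by simpa using hx
      have hx0 : x = 0 := Subtype.ext this
      simp [hx0]
    have li := ((bK.prod (Module.Basis.singleton PUnit.{1} ℤ)).linearIndependent).map' Ψ hΨ
    have hcard := (Pi.basisFun ℤ (Fin (r + 1))).card_le_card_of_linearIndependent li
    simp only [Fintype.card_sum, Fintype.card_fin, Fintype.card_punit] at hcard
    have hkr : k ≤ r := by omega
    have hBK : ∀ b : ↥B, F ↑b ∈ LinearMap.ker χL := by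
      intro b
      exact LinearMap.mem_ker.mpr (hBK0 _ ((memBsub _).mpr ⟨↑b, b.2, rfl⟩))
    let emb : ↥B → (Fin r → ℤ) :=
      fun b => padHom hkr (Finsupp.equivFunOnFinite (bK.repr ⟨F ↑b, hBK b⟩))
    have embadd : ∀ b c : ↥B, emb (b * c) = emb b + emb c := by
      intro b c
      have h1 : (⟨F ↑(b * c), hBK _⟩ : ↥(LinearMap.ker χL)) = ⟨F ↑b, hBK b⟩ + ⟨F ↑c, hBK c⟩ := by
        apply Subtype.ext
        show F ↑(b * c) = F ↑b + F ↑c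
        rw [Subgroup.coe_mul, Fmul]
      show padHom hkr (Finsupp.equivFunOnFinite (bK.repr ⟨F ↑(b * c), hBK _⟩)) = _
      rw [h1, map_add]
      have h2 : ∀ u v : (Fin k →₀ ℤ), Finsupp.equivFunOnFinite (u + v)
          = Finsupp.equivFunOnFinite u + Finsupp.equivFunOnFinite v := by
        intro u v; rfl
      rw [h2, map_add]
    let g : ↥B →* Multiplicative (Fin r → ℤ) :=
      { toFun := fun b => Multiplicative.ofAdd (emb b)
        map_one' := by
          have h1 : (⟨F ↑(1 : ↥B), hBK _⟩ : ↥(LinearMap.ker χL)) = 0 := by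
            apply Subtype.ext
            show F ↑(1 : ↥B) = 0
            rw [Subgroup.coe_one, Fone]
          show Multiplicative.ofAdd (padHom hkr (Finsupp.equivFunOnFinite (bK.repr ⟨F ↑(1:↥B), hBK _⟩))) = 1
          rw [h1]
          simp only [map_zero]
          rw [show (Finsupp.equivFunOnFinite (0 : Fin k →₀ ℤ)) = 0 from rfl, map_zero]
          rfl
        map_mul' := fun b c => by
          show Multiplicative.ofAdd (emb (b * c)) = Multiplicative.ofAdd (emb b) * Multiplicative.ofAdd (emb c)
          rw [embadd]
          rfl }
    refine ⟨g, ?_⟩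
    intro b c hbc
    have h1 : emb b = emb c := by
      have := congrArg Multiplicative.toAdd hbc
      simpa [g] using this
    have h2 := padHom_injective hkr h1
    have h3 := (Finsupp.equivFunOnFinite).injective h2
    have h4 := bK.repr.injective h3
    have h5 : F ↑b = F ↑c := congrArg Subtype.val h4
    exact Subtype.ext (Finj h5)


lemma happly_mul (f g : ℝ ≃ₜ ℝ) (x : ℝ) : (f * g) x = f (g x) := rfl

lemma happly_one (x : ℝ) : (1 : ℝ ≃ₜ ℝ) x = x := rfl

lemma happly_inv (f : ℝ ≃ₜ ℝ) (x : ℝ) : f⁻¹ (f x) = x := f.symm_apply_apply x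

lemma happly_inv' (f : ℝ ≃ₜ ℝ) (x : ℝ) : f (f⁻¹ x) = x := f.apply_symm_apply x

/-- The orbit of `x` under `H`. -/
def Orb (H : Subgroup (ℝ ≃ₜ ℝ)) (x : ℝ) : Set ℝ := {y | ∃ h ∈ H, h x = y}

lemma orb_self (H : Subgroup (ℝ ≃ₜ ℝ)) (x : ℝ) : x ∈ Orb H x := ⟨1, H.one_mem, happly_one x⟩

lemma orb_map {H : Subgroup (ℝ ≃ₜ ℝ)} {x : ℝ} {h : ℝ ≃ₜ ℝ} (hH : h ∈ H) :
    ∀ y ∈ Orb H x, h y ∈ Orb H x := by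
  rintro y ⟨h', hh', rfl⟩
  exact ⟨h * h', H.mul_mem hH hh', (happly_mul h h' x)⟩

lemma clOrb_inv {H : Subgroup (ℝ ≃ₜ ℝ)} {x : ℝ} {h : ℝ ≃ₜ ℝ} (hH : h ∈ H) {t : ℝ}
    (ht : t ∈ closure (Orb H x)) : h t ∈ closure (Orb H x) := by
  have h1 : h t ∈ ⇑h '' closure (Orb H x) := mem_image_of_mem _ ht
  rw [Homeomorph.image_closure] at h1
  refine closure_mono ?_ h1
  rintro y ⟨u, hu, rfl⟩
  exact orb_map hH u hu

/-- `x` has dense orbit in `I` (formulated with open intervals). -/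
def DenseIn (H : Subgroup (ℝ ≃ₜ ℝ)) (I : Set ℝ) (x : ℝ) : Prop :=
  ∀ c d : ℝ, c < d → Ioo c d ⊆ I → ∃ h ∈ H, h x ∈ Ioo c d

/-- Nontransitive points of `H` acting on `I`. -/
def NT (H : Subgroup (ℝ ≃ₜ ℝ)) (I : Set ℝ) : Set ℝ := {x ∈ I | ¬ DenseIn H I x}

/-- Context: `H` acts on an open order-connected set `I` by order preserving homeos,
topologically transitively, with all nontrivial fixed point sets countable. -/
structure Ctx (H : Subgroup (ℝ ≃ₜ ℝ)) (I : Set ℝ) : Prop where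
  mono : ∀ h ∈ H, StrictMono (⇑h)
  fixcnt : ∀ h : ℝ ≃ₜ ℝ, h ∈ H → h ≠ 1 → {x : ℝ | h x = x}.Countable
  comm : ∀ a b : ℝ ≃ₜ ℝ, a ∈ H → b ∈ H → a * b = b * a
  iopen : IsOpen I
  iconn : I.OrdConnected
  ine : I.Nonempty
  iinv : ∀ h ∈ H, ∀ x, x ∈ I ↔ h x ∈ I
  trans : ∀ U V : Set ℝ, U ⊆ I → V ⊆ I → IsOpen U → IsOpen V → U.Nonempty → V.Nonempty →
    ∃ h ∈ H, ((⇑h) '' U ∩ V).Nonempty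

namespace Ctx

variable {H : Subgroup (ℝ ≃ₜ ℝ)} {I : Set ℝ}

lemma noFix (ctx : Ctx H I) {p : ℝ} (hp : p ∈ I) (hfix : ∀ h ∈ H, h p = p) : False := by
  obtain ⟨ε, hε, hball⟩ := Metric.isOpen_iff.mp ctx.iopen p hp
  rw [Real.ball_eq_Ioo] at hball
  obtain ⟨h, hH, w, hw⟩ := ctx.trans (Ioo (p - ε) p) (Ioo p (p + ε))
    (fun x hx => hball ⟨hx.1, lt_trans hx.2 (by linarith)⟩)
    (fun x hx => hball ⟨by linarith [hx.1], hx.2⟩)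
    isOpen_Ioo isOpen_Ioo (nonempty_Ioo.mpr (by linarith)) (nonempty_Ioo.mpr (by linarith))
  obtain ⟨⟨u, hu, rfl⟩, hv⟩ := hw
  have h1 : h u < h p := (ctx.mono h hH) hu.2
  rw [hfix h hH] at h1
  exact absurd hv.1 (not_lt.mpr (le_of_lt h1))

lemma exists_lt (ctx : Ctx H I) {M : Set ℝ} (hMsub : M ⊆ I) (hMcl : closure M ∩ I ⊆ M)
    (hMne : M.Nonempty) (hMinv : ∀ h ∈ H, ∀ x ∈ M, h x ∈ M) {w : ℝ} (hw : w ∈ I) :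
    ∃ m ∈ M, m < w := by
  by_contra hcon
  push_neg at hcon
  have hbdd : BddBelow M := ⟨w, fun m hm => hcon m hm⟩
  set c := sInf M with hc
  have hc1 : c ∈ closure M := csInf_mem_closure hMne hbdd
  obtain ⟨m₀, hm₀⟩ := hMne
  have hcI : c ∈ I := by
    have h1 : w ≤ c := le_csInf ⟨m₀, hm₀⟩ (fun m hm => hcon m hm)
    have h2 : c ≤ m₀ := csInf_le hbdd hm₀
    exact ctx.iconn.out hw (hMsub hm₀) ⟨h1, h2⟩
  have hcM : c ∈ M := hMcl ⟨hc1, hcI⟩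
  apply ctx.noFix hcI
  intro h hH
  have h1 : c ≤ h c := csInf_le hbdd (hMinv h hH c hcM)
  have h2 : c ≤ h⁻¹ c := csInf_le hbdd (hMinv h⁻¹ (H.inv_mem hH) c hcM)
  have h3 : h c ≤ h (h⁻¹ c) := (ctx.mono h hH).monotone h2
  rw [happly_inv'] at h3
  exact le_antisymm h3 h1

lemma exists_gt (ctx : Ctx H I) {M : Set ℝ} (hMsub : M ⊆ I) (hMcl : closure M ∩ I ⊆ M)
    (hMne : M.Nonempty) (hMinv : ∀ h ∈ H, ∀ x ∈ M, h x ∈ M) {w : ℝ} (hw : w ∈ I) :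
    ∃ m ∈ M, w < m := by
  by_contra hcon
  push_neg at hcon
  have hbdd : BddAbove M := ⟨w, fun m hm => hcon m hm⟩
  set c := sSup M with hc
  have hc1 : c ∈ closure M := csSup_mem_closure hMne hbdd
  obtain ⟨m₀, hm₀⟩ := hMne
  have hcI : c ∈ I := by
    have h1 : c ≤ w := csSup_le ⟨m₀, hm₀⟩ (fun m hm => hcon m hm)
    have h2 : m₀ ≤ c := le_csSup hbdd hm₀
    exact ctx.iconn.out (hMsub hm₀) hw ⟨h2, h1⟩
  have hcM : c ∈ M := hMcl ⟨hc1, hcI⟩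
  apply ctx.noFix hcI
  intro h hH
  have h1 : h c ≤ c := le_csSup hbdd (hMinv h hH c hcM)
  have h2 : h⁻¹ c ≤ c := le_csSup hbdd (hMinv h⁻¹ (H.inv_mem hH) c hcM)
  have h3 : h (h⁻¹ c) ≤ h c := (ctx.mono h hH).monotone h2
  rw [happly_inv'] at h3
  exact le_antisymm h1 h3

lemma gap (ctx : Ctx H I) {M : Set ℝ} (hMsub : M ⊆ I) (hMcl : closure M ∩ I ⊆ M)
    (hMne : M.Nonempty) (hMinv : ∀ h ∈ H, ∀ x ∈ M, h x ∈ M) {w : ℝ}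
    (hwI : w ∈ I) (hwM : w ∉ M) :
    ∃ a b : ℝ, a ∈ M ∧ b ∈ M ∧ a < w ∧ w < b ∧ Ioo a b ∩ M = ∅ := by
  obtain ⟨m1, hm1, hm1w⟩ := ctx.exists_lt hMsub hMcl hMne hMinv hwI
  obtain ⟨m2, hm2, hm2w⟩ := ctx.exists_gt hMsub hMcl hMne hMinv hwI
  have hAne : (M ∩ Iio w).Nonempty := ⟨m1, hm1, hm1w⟩
  have hAbdd : BddAbove (M ∩ Iio w) := ⟨w, fun x hx => le_of_lt hx.2⟩
  set a := sSup (M ∩ Iio w) with ha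
  have haleww : a ≤ w := csSup_le hAne (fun x hx => le_of_lt hx.2)
  have haM : a ∈ M := by
    apply hMcl
    refine ⟨closure_mono inter_subset_left (csSup_mem_closure hAne hAbdd), ?_⟩
    have h1 : m1 ≤ a := le_csSup hAbdd ⟨hm1, hm1w⟩
    exact ctx.iconn.out (hMsub hm1) hwI ⟨h1, haleww⟩
  have haw : a < w := lt_of_le_of_ne haleww (fun h => hwM (h ▸ haM))
  have hBne : (M ∩ Ioi w).Nonempty := ⟨m2, hm2, hm2w⟩
  have hBbdd : BddBelow (M ∩ Ioi w) := ⟨w, fun x hx => le_of_lt hx.2⟩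
  set b := sInf (M ∩ Ioi w) with hb
  have hwleb : w ≤ b := le_csInf hBne (fun x hx => le_of_lt hx.2)
  have hbM : b ∈ M := by
    apply hMcl
    refine ⟨closure_mono inter_subset_left (csInf_mem_closure hBne hBbdd), ?_⟩
    have h1 : b ≤ m2 := csInf_le hBbdd ⟨hm2, hm2w⟩
    exact ctx.iconn.out hwI (hMsub hm2) ⟨hwleb, h1⟩
  have hwb : w < b := lt_of_le_of_ne hwleb (fun h => hwM (h ▸ hbM))
  refine ⟨a, b, haM, hbM, haw, hwb, ?_⟩
  ext x
  simp only [mem_inter_iff, mem_Ioo, mem_empty_iff_false, iff_false, not_and]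
  rintro ⟨hax, hxb⟩ hxM
  rcases lt_trichotomy x w with hlt | heq | hgt
  · exact absurd (le_csSup hAbdd ⟨hxM, hlt⟩) (not_le.mpr hax)
  · exact hwM (heq ▸ hxM)
  · exact absurd (csInf_le hBbdd ⟨hxM, hgt⟩) (not_le.mpr hxb)

lemma stabCapture (ctx : Ctx H I) {M : Set ℝ}
    (hMinv : ∀ h ∈ H, ∀ x ∈ M, h x ∈ M) {a b : ℝ} (haM : a ∈ M) (hbM : b ∈ M)
    (hgap : Ioo a b ∩ M = ∅) {h : ℝ ≃ₜ ℝ} (hH : h ∈ H) {y : ℝ}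
    (hy : y ∈ Ioo a b) (hhy : h y ∈ Ioo a b) : h a = a ∧ h b = b := by
  have hmono := ctx.mono h hH
  have hmono' := ctx.mono h⁻¹ (H.inv_mem hH)
  have hnogap : ∀ x, x ∈ Ioo a b → x ∉ M := by
    intro x hx hxM
    have hmem : x ∈ Ioo a b ∩ M := ⟨hx, hxM⟩
    rw [hgap] at hmem
    exact hmem
  constructor
  · rcases lt_trichotomy (h a) a with hlt | heq | hgt
    · exfalso
      apply hnogap (h⁻¹ a) ?_ (hMinv h⁻¹ (H.inv_mem hH) a haM)
      constructor
      · have h1 : h⁻¹ (h a) < h⁻¹ a := hmono' hlt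
        rwa [happly_inv] at h1
      · have h1 : h⁻¹ a < h⁻¹ (h y) := hmono' hhy.1
        rw [happly_inv] at h1
        exact lt_trans h1 hy.2
    · exact heq
    · exfalso
      apply hnogap (h a) ?_ (hMinv h hH a haM)
      exact ⟨hgt, lt_trans (hmono hy.1) hhy.2⟩
  · rcases lt_trichotomy (h b) b with hlt | heq | hgt
    · exfalso
      apply hnogap (h b) ?_ (hMinv h hH b hbM)
      exact ⟨lt_trans hhy.1 (hmono hy.2), hlt⟩
    · exact heq
    · exfalso
      apply hnogap (h⁻¹ b) ?_ (hMinv h⁻¹ (H.inv_mem hH) b hbM)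
      constructor
      · have h1 : h⁻¹ (h y) < h⁻¹ b := hmono' hhy.2
        rw [happly_inv] at h1
        exact lt_trans hy.1 h1
      · have h1 : h⁻¹ b < h⁻¹ (h b) := hmono' hgt
        rwa [happly_inv] at h1

end Ctx

/-- The subgroup of elements of `H` fixing both `a` and `b`. -/
def stab (H : Subgroup (ℝ ≃ₜ ℝ)) (a b : ℝ) : Subgroup (ℝ ≃ₜ ℝ) where
  carrier := {h | h ∈ H ∧ h a = a ∧ h b = b}
  one_mem' := ⟨H.one_mem, rfl, rfl⟩
  mul_mem' := by
    rintro h h' ⟨hH, ha, hb⟩ ⟨h'H, h'a, h'b⟩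
    exact ⟨H.mul_mem hH h'H, by rw [happly_mul, h'a, ha], by rw [happly_mul, h'b, hb]⟩
  inv_mem' := by
    rintro h ⟨hH, ha, hb⟩
    refine ⟨H.inv_mem hH, ?_, ?_⟩
    · conv_lhs => rw [← ha]
      exact happly_inv h a
    · conv_lhs => rw [← hb]
      exact happly_inv h b

lemma stab_le (H : Subgroup (ℝ ≃ₜ ℝ)) (a b : ℝ) : stab H a b ≤ H := fun _ hh => hh.1

lemma mem_stab {H : Subgroup (ℝ ≃ₜ ℝ)} {a b : ℝ} {h : ℝ ≃ₜ ℝ} :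
    h ∈ stab H a b ↔ h ∈ H ∧ h a = a ∧ h b = b := Iff.rfl


theorem key : ∀ (r : ℕ) (H : Subgroup (ℝ ≃ₜ ℝ)) (f : ↥H →* Multiplicative (Fin r → ℤ)),
    Function.Injective f → ∀ I : Set ℝ, Ctx H I → (NT H I).Countable := by
  intro r
  induction r with
  | zero =>
    intro H f hf I ctx
    exfalso
    obtain ⟨p, hp⟩ := ctx.ine
    obtain ⟨ε, hε, hball⟩ := Metric.isOpen_iff.mp ctx.iopen p hp
    rw [Real.ball_eq_Ioo] at hball
    obtain ⟨h, hH, w, hw⟩ := ctx.trans (Ioo (p - ε) p) (Ioo p (p + ε))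
      (fun x hx => hball ⟨hx.1, lt_trans hx.2 (by linarith)⟩)
      (fun x hx => hball ⟨by linarith [hx.1], hx.2⟩)
      isOpen_Ioo isOpen_Ioo (nonempty_Ioo.mpr (by linarith)) (nonempty_Ioo.mpr (by linarith))
    obtain ⟨⟨u, hu, rfl⟩, hv⟩ := hw
    have h0 : Multiplicative.toAdd (f ⟨h, hH⟩) = Multiplicative.toAdd (f 1) :=
      funext (fun i => i.elim0)
    have h1 : (⟨h, hH⟩ : ↥H) = 1 := hf (Multiplicative.toAdd.injective h0)
    have h2 : h = 1 := congrArg Subtype.val h1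
    rw [h2, happly_one] at hv
    exact absurd hv.1 (not_lt.mpr (le_of_lt hu.2))
  | succ r IH =>
    intro H f hf I ctx
    by_cases hNT : NT H I = ∅
    · rw [hNT]; exact countable_empty
    obtain ⟨z, hzI, hznd⟩ : ∃ z, z ∈ I ∧ ¬ DenseIn H I z := by
      obtain ⟨z, hz⟩ := nonempty_iff_ne_empty.mpr hNT
      exact ⟨z, hz.1, hz.2⟩
    rw [DenseIn] at hznd
    push_neg at hznd
    obtain ⟨c, d, hcd, hcdI, hmiss⟩ := hznd
    set K := closure (Orb H z) ∩ I with hK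
    have hKsub : K ⊆ I := inter_subset_right
    have hclK : closure K ⊆ closure (Orb H z) := by
      calc closure K ⊆ closure (closure (Orb H z)) := closure_mono inter_subset_left
      _ = closure (Orb H z) := closure_closure
    have hKcl : closure K ∩ I ⊆ K := fun x hx => ⟨hclK hx.1, hx.2⟩
    have hzK : z ∈ K := ⟨subset_closure (orb_self H z), hzI⟩
    have hKne : K.Nonempty := ⟨z, hzK⟩
    have hKinv : ∀ h ∈ H, ∀ x ∈ K, h x ∈ K := by
      intro h hH x hx
      exact ⟨clOrb_inv hH hx.1, (ctx.iinv h hH x).mp hx.2⟩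
    set w₀ := (c + d) / 2 with hw₀def
    have hw₀ : w₀ ∈ Ioo c d := ⟨by simp only [hw₀def]; linarith, by simp only [hw₀def]; linarith⟩
    have hw₀I : w₀ ∈ I := hcdI hw₀
    have hw₀K : w₀ ∉ K := by
      rintro ⟨hw1, -⟩
      rw [mem_closure_iff] at hw1
      obtain ⟨y, hy1, hy2⟩ := hw1 (Ioo c d) isOpen_Ioo hw₀
      obtain ⟨h', hH', rfl⟩ := hy2
      exact hmiss h' hH' hy1
    obtain ⟨a₀, b₀, ha₀, hb₀, ha₀w, hwb₀, hgap₀⟩ := ctx.gap hKsub hKcl hKne hKinv hw₀I hw₀K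
    have hIooI : Ioo a₀ b₀ ⊆ I := fun x hx =>
      ctx.iconn.out (hKsub ha₀) (hKsub hb₀) ⟨le_of_lt hx.1, le_of_lt hx.2⟩
    obtain ⟨s, hsH, v, hv'⟩ := ctx.trans (Ioo a₀ w₀) (Ioo w₀ b₀)
      (fun x hx => hIooI ⟨hx.1, lt_trans hx.2 hwb₀⟩)
      (fun x hx => hIooI ⟨lt_trans ha₀w hx.1, hx.2⟩)
      isOpen_Ioo isOpen_Ioo (nonempty_Ioo.mpr ha₀w) (nonempty_Ioo.mpr hwb₀)
    obtain ⟨⟨u, hu, rfl⟩, hv⟩ := hv'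
    have huJ : u ∈ Ioo a₀ b₀ := ⟨hu.1, lt_trans hu.2 hwb₀⟩
    have hsuJ : s u ∈ Ioo a₀ b₀ := ⟨lt_trans ha₀w hv.1, hv.2⟩
    have hs1 : s ≠ 1 := by
      intro h1
      rw [h1, happly_one] at hv
      exact absurd hv.1 (not_lt.mpr (le_of_lt hu.2))
    obtain ⟨hsa₀, -⟩ := ctx.stabCapture hKinv ha₀ hb₀ hgap₀ hsH huJ hsuJ
    set B := {x : ℝ | s x = x} with hB
    have hBcnt : B.Countable := ctx.fixcnt s hsH hs1
    have hBcl : IsClosed B := isClosed_eq s.continuous continuous_id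
    set B' := B ∩ I with hB'def
    have hB'sub : B' ⊆ I := inter_subset_right
    have hB'cl : closure B' ∩ I ⊆ B' := by
      intro x hx
      exact ⟨hBcl.closure_subset (closure_mono inter_subset_left hx.1), hx.2⟩
    have hB'ne : B'.Nonempty := ⟨a₀, hsa₀, hKsub ha₀⟩
    have hB'inv : ∀ h ∈ H, ∀ x ∈ B', h x ∈ B' := by
      intro h hH x hx
      refine ⟨?_, (ctx.iinv h hH x).mp hx.2⟩
      show s (h x) = h x
      have h1 : (s * h) x = (h * s) x := by rw [ctx.comm s h hsH hH]
      rw [happly_mul, happly_mul] at h1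
      rw [h1, hx.1]
    set P := {q : ℝ × ℝ | q.1 ∈ B' ∧ q.2 ∈ B' ∧ q.1 < q.2 ∧ Ioo q.1 q.2 ∩ B' = ∅} with hPdef
    have hB'cnt : B'.Countable := hBcnt.mono inter_subset_left
    have hPcnt : P.Countable :=
      Set.Countable.mono (fun q hq => Set.mem_prod.mpr ⟨hq.1, hq.2.1⟩) (hB'cnt.prod hB'cnt)
    -- main inclusion
    have main_sub : NT H I ⊆ B' ∪ ⋃ q ∈ P, NT (stab H q.1 q.2) (Ioo q.1 q.2) := by
      intro x hx
      by_cases hxB : x ∈ B'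
      · exact Or.inl hxB
      right
      obtain ⟨a, b, haB, hbB, hax, hxb, hgapB⟩ := ctx.gap hB'sub hB'cl hB'ne hB'inv hx.1 hxB
      have hIab : Ioo a b ⊆ I := fun t ht =>
        ctx.iconn.out (hB'sub haB) (hB'sub hbB) ⟨le_of_lt ht.1, le_of_lt ht.2⟩
      rw [mem_iUnion₂]
      refine ⟨(a, b), ⟨haB, hbB, lt_trans hax hxb, hgapB⟩, ⟨⟨hax, hxb⟩, ?_⟩⟩
      intro hdense
      apply hx.2
      have hsubcl : Ioo a b ⊆ closure (Orb H x) := by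
        intro t ht
        rw [mem_closure_iff]
        intro O hO htO
        obtain ⟨ε, hε, hball⟩ := Metric.isOpen_iff.mp hO t htO
        rw [Real.ball_eq_Ioo] at hball
        have hc'd' : max (t - ε) a < min (t + ε) b := by
          have h1 := ht.1; have h2 := ht.2
          simp only [max_lt_iff, lt_min_iff]
          exact ⟨⟨by linarith, by linarith⟩, ⟨by linarith, by linarith⟩⟩
        have hsub1 : Ioo (max (t - ε) a) (min (t + ε) b) ⊆ Ioo a b := fun y hy =>
          ⟨lt_of_le_of_lt (le_max_right _ _) hy.1, lt_of_lt_of_le hy.2 (min_le_right _ _)⟩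
        obtain ⟨h, hhst, hhx⟩ := hdense _ _ hc'd' hsub1
        refine ⟨h x, ?_, ⟨h, stab_le H a b hhst, rfl⟩⟩
        apply hball
        exact ⟨lt_of_le_of_lt (le_max_left _ _) hhx.1, lt_of_lt_of_le hhx.2 (min_le_left _ _)⟩
      intro c₁ d₁ hc₁d₁ hsubI₁
      obtain ⟨h, hH, v₁, hv₁'⟩ := ctx.trans (Ioo a b) (Ioo c₁ d₁) hIab hsubI₁
        isOpen_Ioo isOpen_Ioo (nonempty_Ioo.mpr (lt_trans hax hxb)) (nonempty_Ioo.mpr hc₁d₁)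
      obtain ⟨⟨u₁, hu₁, rfl⟩, hv₁⟩ := hv₁'
      have h1 : h u₁ ∈ closure (Orb H x) := clOrb_inv hH (hsubcl hu₁)
      rw [mem_closure_iff] at h1
      obtain ⟨y, hy1, hy2⟩ := h1 (Ioo c₁ d₁) isOpen_Ioo hv₁
      obtain ⟨h₂, hh₂, rfl⟩ := hy2
      exact ⟨h₂, hh₂, hy1⟩
    -- countability of each piece
    have piece_cnt : ∀ q ∈ P, (NT (stab H q.1 q.2) (Ioo q.1 q.2)).Countable := by
      rintro ⟨a, b⟩ ⟨haB, hbB, hab, hgapB⟩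
      have hIab : Ioo a b ⊆ I := fun t ht =>
        ctx.iconn.out (hB'sub haB) (hB'sub hbB) ⟨le_of_lt ht.1, le_of_lt ht.2⟩
      have hstabctx : Ctx (stab H a b) (Ioo a b) :=
        { mono := fun h hh => ctx.mono h hh.1
          fixcnt := fun h hh => ctx.fixcnt h hh.1
          comm := fun g g' hg hg' => ctx.comm g g' hg.1 hg'.1
          iopen := isOpen_Ioo
          iconn := ordConnected_Ioo
          ine := nonempty_Ioo.mpr hab
          iinv := by
            intro h hh x
            have hm := ctx.mono h hh.1
            constructor
            · intro hx
              exact ⟨by rw [← hh.2.1]; exact hm hx.1, by rw [← hh.2.2]; exact hm hx.2⟩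
            · intro hx
              constructor
              · have h1 := hx.1
                rw [← hh.2.1] at h1
                exact hm.lt_iff_lt.mp h1
              · have h1 := hx.2
                rw [← hh.2.2] at h1
                exact hm.lt_iff_lt.mp h1
          trans := by
            intro U V hU hV hUo hVo hUne hVne
            obtain ⟨h, hH, v', hv''⟩ :=
              ctx.trans U V (hU.trans hIab) (hV.trans hIab) hUo hVo hUne hVne
            obtain ⟨⟨u', hu', rfl⟩, hv'⟩ := hv''
            have hcap := ctx.stabCapture hB'inv haB hbB hgapB hH (hU hu') (hV hv')
            exact ⟨h, ⟨hH, hcap.1, hcap.2⟩, ⟨h u', ⟨u', hu', rfl⟩, hv'⟩⟩ }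
      rcases GTdich r f hf ((stab H a b).subgroupOf H) with ⟨g, hg⟩ | hfin
      · let e := Subgroup.subgroupOfEquivOfLe (stab_le H a b)
        refine IH (stab H a b) (g.comp e.symm.toMonoidHom) ?_ (Ioo a b) hstabctx
        intro x y hxy
        apply e.symm.injective
        apply hg
        simpa using hxy
      · exfalso
        haveI := hfin
        have resp : ∀ h₁ h₂ : ↥H, QuotientGroup.leftRel ((stab H a b).subgroupOf H) h₁ h₂ →
            ((h₁ : ℝ ≃ₜ ℝ)) a = ((h₂ : ℝ ≃ₜ ℝ)) a := by
          intro h₁ h₂ hrel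
          have hmem := QuotientGroup.leftRel_apply.mp hrel
          rw [Subgroup.mem_subgroupOf] at hmem
          have hσa : ((↑(h₁⁻¹ * h₂) : ℝ ≃ₜ ℝ)) a = a := hmem.2.1
          have hcoe : (↑(h₁⁻¹ * h₂) : ℝ ≃ₜ ℝ) = (↑h₁)⁻¹ * ↑h₂ := rfl
          rw [hcoe] at hσa
          have := congrArg (⇑(↑h₁ : ℝ ≃ₜ ℝ)) hσa
          rw [← happly_mul, mul_inv_cancel_left] at this
          exact this.symm
        set q' : (↥H ⧸ ((stab H a b).subgroupOf H)) → ℝ :=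
          Quotient.lift (fun (h : ↥H) => ((h : ℝ ≃ₜ ℝ)) a) resp with hq'def
        have horb : {y : ℝ | ∃ h ∈ H, h a = y}.Finite := by
          apply (Set.finite_range q').subset
          rintro y ⟨h, hH, rfl⟩
          exact ⟨Quotient.mk'' ⟨h, hH⟩, rfl⟩
        obtain ⟨pm, hpm, hmax0⟩ := Set.Finite.exists_maximalFor id _ horb
          ⟨a, 1, H.one_mem, happly_one a⟩
        have hmax : ∀ a' ∈ {y : ℝ | ∃ h ∈ H, h a = y}, id pm ≤ id a' → id pm = id a' :=
          fun a' ha' hle => le_antisymm hle (hmax0 ha' hle)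
        have hpmI : pm ∈ I := by
          obtain ⟨h₀, h₀H, rfl⟩ := hpm
          exact (ctx.iinv h₀ h₀H a).mp (hB'sub haB)
        apply ctx.noFix hpmI
        intro h hH
        obtain ⟨h₀, h₀H, rfl⟩ := hpm
        have hmem1 : h (h₀ a) ∈ {y : ℝ | ∃ h' ∈ H, h' a = y} :=
          ⟨h * h₀, H.mul_mem hH h₀H, happly_mul h h₀ a⟩
        rcases le_or_gt (h₀ a) (h (h₀ a)) with hle | hlt
        · exact (hmax _ hmem1 hle).symm
        · exfalso
          have hmem2 : h⁻¹ (h₀ a) ∈ {y : ℝ | ∃ h' ∈ H, h' a = y} :=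
            ⟨h⁻¹ * h₀, H.mul_mem (H.inv_mem hH) h₀H, happly_mul h⁻¹ h₀ a⟩
          have h1 : h⁻¹ (h (h₀ a)) < h⁻¹ (h₀ a) := (ctx.mono h⁻¹ (H.inv_mem hH)) hlt
          rw [happly_inv] at h1
          have h2 := hmax _ hmem2 (le_of_lt h1)
          simp only [id] at h2
          rw [← h2] at h1
          exact lt_irrefl _ h1
    exact Set.Countable.mono main_sub (hB'cnt.union (hPcnt.biUnion piece_cnt))

end AMaux

/-- Let `G ≤ Homeo₊(ℝ)` be topologically transitive, isomorphic to `ℤⁿ` (`n ≥ 2`), with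
at most countably many nontransitive points.  Then every topologically transitive
subgroup `H` of `G` also has at most countably many nontransitive points. -/
theorem almost_minimal_of_subgroup (n : ℕ) (hn : 2 ≤ n) (G : Subgroup (ℝ ≃ₜ ℝ))
    (hop : ∀ g ∈ G, StrictMono ⇑g)
    (hiso : Nonempty (G ≃* Multiplicative (Fin n → ℤ)))
    (hGtrans : TopTransitive G)
    (hGam : {x : ℝ | ¬ Dense {y : ℝ | ∃ g ∈ G, g x = y}}.Countable)
    (H : Subgroup (ℝ ≃ₜ ℝ)) (hHG : H ≤ G) (hHtrans : TopTransitive H) :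
    {x : ℝ | ¬ Dense {y : ℝ | ∃ h ∈ H, h x = y}}.Countable := by
  classical
  obtain ⟨e⟩ := hiso
  have hGcomm : ∀ a b : ℝ ≃ₜ ℝ, a ∈ G → b ∈ G → a * b = b * a := by
    intro a b ha hb
    have h1 : e (⟨a, ha⟩ * ⟨b, hb⟩) = e (⟨b, hb⟩ * ⟨a, ha⟩) := by
      rw [map_mul, map_mul, mul_comm]
    have h2 := e.injective h1
    exact congrArg Subtype.val h2
  have hfixcnt : ∀ h : ℝ ≃ₜ ℝ, h ∈ H → h ≠ 1 → {x : ℝ | h x = x}.Countable := by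
    intro h hh hne
    apply hGam.mono
    intro x hx
    simp only [Set.mem_setOf_eq] at hx ⊢
    intro hdense
    apply hne
    apply Homeomorph.ext
    intro t
    have hsub : {y : ℝ | ∃ g ∈ G, g x = y} ⊆ {t : ℝ | h t = t} := by
      rintro y ⟨g, hgG, rfl⟩
      show h (g x) = g x
      have h1 : (h * g) x = (g * h) x := by rw [hGcomm h g (hHG hh) hgG]
      rw [AMaux.happly_mul, AMaux.happly_mul] at h1
      rw [h1, hx]
    have hcl : IsClosed {t : ℝ | h t = t} := isClosed_eq h.continuous continuous_id
    have hall : (Set.univ : Set ℝ) ⊆ {t : ℝ | h t = t} := by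
      intro t _
      exact hcl.closure_subset (closure_mono hsub (hdense t))
    exact hall (Set.mem_univ t)
  have ctx : AMaux.Ctx H Set.univ :=
    { mono := fun h hh => hop h (hHG hh)
      fixcnt := hfixcnt
      comm := fun a b ha hb => hGcomm a b (hHG ha) (hHG hb)
      iopen := isOpen_univ
      iconn := Set.ordConnected_univ
      ine := ⟨0, Set.mem_univ 0⟩
      iinv := fun _ _ _ => ⟨fun _ => Set.mem_univ _, fun _ => Set.mem_univ _⟩
      trans := fun U V _ _ hUo hVo hUne hVne => hHtrans U V hUo hVo hUne hVne }
  have hinj : Function.Injective ⇑(e.toMonoidHom.comp (Subgroup.inclusion hHG)) := by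
    intro x y hxy
    rw [MonoidHom.comp_apply, MonoidHom.comp_apply] at hxy
    exact Subgroup.inclusion_injective hHG (e.injective hxy)
  have hmain := AMaux.key n H (e.toMonoidHom.comp (Subgroup.inclusion hHG)) hinj Set.univ ctx
  refine Set.Countable.mono ?_ hmain
  intro x hx
  refine ⟨Set.mem_univ x, ?_⟩
  intro hdi
  apply hx
  apply dense_iff_inter_open.mpr
  rintro U hU ⟨u, hu⟩
  obtain ⟨ε, hε, hball⟩ := Metric.isOpen_iff.mp hU u hu
  rw [Real.ball_eq_Ioo] at hball
  obtain ⟨h, hh, hhx⟩ := hdi (u - ε) (u + ε) (by linarith) (fun _ _ => Set.mem_univ _)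
  exact ⟨h x, hball hhx, ⟨h, hh, rfl⟩⟩
end
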